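/- arXiv:2212.09070 — 8 statements merged into one kernel-verified Lean document; each statement's English description precedes it below -/
import Mathlib

section
/- For any positive integer n and nonnegative integer l, the sum over k from l+1 to n of (2k-1)·binom(2n-1, n-k) equals (n-l)·binom(2n-1, n-l). -/
lemma sum_odd_mul_choose_aux (n : ℕ) (hn : 0 < n) :
    ∀ d l, n - l = d →
      ∑ k ∈ Finset.Icc (l + 1) n, (2 * k - 1) * Nat.choose (2 * n - 1) (n - k) =
        (n - l) * Nat.choose (2 * n - 1) (n - l) := by
  intro d
  induction d with
  | zero =>
    intro l hl
    have : Finset.Icc (l + 1) n = ∅ := Finset.Icc_eq_empty (by omega)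
    rw [this, hl]
    simp
  | succ d ih =>
    intro l hl
    have hln : l < n := by omega
    rw [← Finset.Ico_add_one_right_eq_Icc,
      Finset.sum_eq_sum_Ico_succ_bot (by omega : l + 1 < n + 1),
      Finset.Ico_add_one_right_eq_Icc]
    rw [ih (l + 1) (by omega)]
    have h1 : n - l = (n - (l + 1)) + 1 := by omega
    have key := Nat.choose_succ_right_eq (2 * n - 1) (n - (l + 1))
    rw [← h1] at key
    have h2 : 2 * n - 1 - (n - (l + 1)) = n + l := by omega
    rw [h2] at key
    have h3 : (2 * (l + 1) - 1) + (n - (l + 1)) = n + l := by omega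
    rw [← add_mul, h3]
    linarith [key]

theorem sum_odd_mul_choose (n : ℕ) (hn : 0 < n) (l : ℕ) :
    ∑ k ∈ Finset.Icc (l + 1) n, (2 * k - 1) * Nat.choose (2 * n - 1) (n - k) =
      (n - l) * Nat.choose (2 * n - 1) (n - l) := by
  exact sum_odd_mul_choose_aux n hn (n - l) l rfl
end

section
/- For any positive integer n and nonnegative integer l, the sum over k from l+1 to n of (-1)^k·binom(2n-1, n-k) equals (-1)^{l+1}·(n-l)/(2n-1)·binom(2n-1, n-l). -/
lemma aux_alt_sum (M : ℕ) : ∀ m : ℕ,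
    ∑ i ∈ Finset.range (m + 1), (-1 : ℚ) ^ i * (Nat.choose (M + 1) i : ℚ)
      = (-1 : ℚ) ^ m * (Nat.choose M m : ℚ) := by
  intro m
  induction m with
  | zero => simp
  | succ m ih =>
    rw [Finset.sum_range_succ, ih, Nat.choose_succ_succ M m]
    push_cast
    ring

theorem sum_neg_one_pow_choose (n : ℕ) (hn : 0 < n) (l : ℕ) :
    ∑ k ∈ Finset.Icc (l + 1) n, (-1 : ℚ) ^ k * (Nat.choose (2 * n - 1) (n - k) : ℚ) =
      (-1 : ℚ) ^ (l + 1) * ((n - l : ℕ) : ℚ) / (2 * n - 1) *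
        (Nat.choose (2 * n - 1) (n - l) : ℚ) := by
  rcases le_or_gt n l with h | h
  · rw [Finset.Icc_eq_empty (by omega), Finset.sum_empty]
    have : n - l = 0 := by omega
    simp [this]
  · -- reindex the sum
    have hre : ∑ k ∈ Finset.Icc (l + 1) n, (-1 : ℚ) ^ k * (Nat.choose (2 * n - 1) (n - k) : ℚ)
        = ∑ i ∈ Finset.range (n - l), (-1 : ℚ) ^ (l + 1 + i) *
            (Nat.choose (2 * n - 1) (n - (l + 1 + i)) : ℚ) := by
      rw [← Finset.Ico_add_one_right_eq_Icc, Finset.sum_Ico_eq_sum_range,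
          show n + 1 - (l + 1) = n - l by omega]
    rw [hre, ← Finset.sum_range_reflect]
    have hsum : ∑ i ∈ Finset.range (n - l), (-1 : ℚ) ^ (l + 1 + (n - l - 1 - i)) *
            (Nat.choose (2 * n - 1) (n - (l + 1 + (n - l - 1 - i))) : ℚ)
        = ∑ i ∈ Finset.range (n - l), (-1 : ℚ) ^ n * ((-1 : ℚ) ^ i *
            (Nat.choose (2 * n - 1) i : ℚ)) := by
      apply Finset.sum_congr rfl
      intro i hi
      rw [Finset.mem_range] at hi
      have h1 : l + 1 + (n - l - 1 - i) = n - i := by omega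
      have h2 : n - (n - i) = i := by omega
      rw [h1, h2]
      have hsq : (-1 : ℚ) ^ i * (-1 : ℚ) ^ i = 1 := by
        rw [← pow_add, ← two_mul, pow_mul]; simp
      have h3 : (-1 : ℚ) ^ (n - i) = (-1 : ℚ) ^ n * (-1 : ℚ) ^ i := by
        have h4 : (n - i) + i = n := by omega
        have h5 := pow_add (-1 : ℚ) (n - i) i
        rw [h4] at h5
        calc (-1 : ℚ) ^ (n - i) = (-1 : ℚ) ^ (n - i) * ((-1 : ℚ) ^ i * (-1 : ℚ) ^ i) := by
              rw [hsq, mul_one]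
          _ = ((-1 : ℚ) ^ (n - i) * (-1 : ℚ) ^ i) * (-1 : ℚ) ^ i := by ring
          _ = (-1 : ℚ) ^ n * (-1 : ℚ) ^ i := by rw [← h5]
      rw [h3]
      ring
    rw [hsum, ← Finset.mul_sum]
    have hS : ∑ i ∈ Finset.range (n - l), (-1 : ℚ) ^ i * (Nat.choose (2 * n - 1) i : ℚ)
        = (-1 : ℚ) ^ (n - l - 1) * (Nat.choose (2 * n - 2) (n - l - 1) : ℚ) := by
      have := aux_alt_sum (2 * n - 2) (n - l - 1)
      rw [show (2 * n - 2) + 1 = 2 * n - 1 by omega,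
          show (n - l - 1) + 1 = n - l by omega] at this
      exact this
    rw [hS]
    have hkey : (2 * n - 1) * Nat.choose (2 * n - 2) (n - l - 1)
        = Nat.choose (2 * n - 1) (n - l) * (n - l) := by
      have h0 := Nat.add_one_mul_choose_eq (2 * n - 2) (n - l - 1)
      rw [show (2 * n - 2) + 1 = 2 * n - 1 by omega,
          show (n - l - 1) + 1 = n - l by omega] at h0
      exact h0
    have hsign : (-1 : ℚ) ^ n * (-1 : ℚ) ^ (n - l - 1) = (-1 : ℚ) ^ (l + 1) := by
      have h4 : n + (n - l - 1) + (l + 1) = 2 * n := by omega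
      have h5 : (-1 : ℚ) ^ (n + (n - l - 1) + (l + 1)) = 1 := by
        rw [h4, pow_mul]; simp
      rw [pow_add, pow_add] at h5
      have h6 : ((-1 : ℚ) ^ (l + 1)) * ((-1 : ℚ) ^ (l + 1)) = 1 := by
        rw [← pow_add, ← two_mul, pow_mul]; simp
      calc (-1 : ℚ) ^ n * (-1 : ℚ) ^ (n - l - 1)
          = (-1 : ℚ) ^ n * (-1 : ℚ) ^ (n - l - 1) *
              ((-1 : ℚ) ^ (l + 1) * (-1 : ℚ) ^ (l + 1)) := by rw [h6, mul_one]
        _ = ((-1 : ℚ) ^ n * (-1 : ℚ) ^ (n - l - 1) * (-1 : ℚ) ^ (l + 1)) * (-1 : ℚ) ^ (l + 1) := by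
            ring
        _ = (-1 : ℚ) ^ (l + 1) := by rw [h5, one_mul]
    have hne : (2 * (n : ℚ) - 1) ≠ 0 := by
      have : (1 : ℚ) ≤ n := by exact_mod_cast hn
      linarith
    have hcast : ((2 * n - 1 : ℕ) : ℚ) = 2 * (n : ℚ) - 1 := by
      have h7 : (2 * n - 1) + 1 = 2 * n := by omega
      have h8 := congrArg (fun x : ℕ => (x : ℚ)) h7
      push_cast at h8
      linarith
    have hkeyQ : (2 * (n : ℚ) - 1) * (Nat.choose (2 * n - 2) (n - l - 1) : ℚ)
        = (Nat.choose (2 * n - 1) (n - l) : ℚ) * ((n - l : ℕ) : ℚ) := by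
      rw [← hcast]
      exact_mod_cast congrArg (fun x : ℕ => (x : ℚ)) hkey
    rw [← mul_assoc, hsign, div_mul_eq_mul_div, eq_div_iff hne]
    linear_combination ((-1 : ℚ) ^ (l + 1)) * hkeyQ
end

section
/- For any positive integers n and l with n ≥ l, the identity holds: sum over k from l to n of [(-1)^k/(2k-1)]·binom(2n-1, n-k)·(2·(2k-1)/(2l-1))^{Δ(k,l)} = (-1)^l/(2n-1)·binom(2n-1, n-l), where Δ(k,l) = 0 if k = l and 1 if k ≠ l. -/
open Finset

lemma lemA (N : ℕ) : ∀ m : ℕ, ∑ j ∈ Finset.range (m+1),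
    (-1:ℚ)^j * ((N+1).choose j : ℚ) = (-1)^m * (N.choose m : ℚ) := by
  intro m
  induction m with
  | zero => simp
  | succ m ih =>
    rw [Finset.sum_range_succ, ih, Nat.choose_succ_succ]
    push_cast
    ring

lemma lemB (N : ℕ) : ∀ m : ℕ, ∑ i ∈ Finset.range (m+1),
    (-1:ℚ)^(i+1) * ((N+1).choose (m-i) : ℚ) = -(N.choose m : ℚ) := by
  intro m
  induction m with
  | zero => simp
  | succ m ih =>
    rw [Finset.sum_range_succ']
    have h1 : ∑ i ∈ Finset.range (m+1), (-1:ℚ)^(i+1+1) * ((N+1).choose (m+1-(i+1)) : ℚ)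
        = -∑ i ∈ Finset.range (m+1), (-1:ℚ)^(i+1) * ((N+1).choose (m-i) : ℚ) := by
      rw [← Finset.sum_neg_distrib]
      apply Finset.sum_congr rfl
      intro i _
      have : m + 1 - (i+1) = m - i := by omega
      rw [this]; ring
    simp only [Nat.sub_zero] at *
    rw [h1, ih, Nat.choose_succ_succ]
    push_cast
    ring

theorem sum_alt_choose_delta (n l : ℕ) (hl : 0 < l) (hn : l ≤ n) :
    ∑ k ∈ Finset.Icc l n,
        (-1 : ℚ) ^ k / (2 * (k : ℚ) - 1) * (Nat.choose (2 * n - 1) (n - k) : ℚ) *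
          (2 * (2 * (k : ℚ) - 1) / (2 * (l : ℚ) - 1)) ^ (if k = l then 0 else 1) =
      (-1 : ℚ) ^ l / (2 * (n : ℚ) - 1) * (Nat.choose (2 * n - 1) (n - l) : ℚ) := by
  obtain ⟨m, rfl⟩ : ∃ m, n = l + m := ⟨n - l, by omega⟩
  have hl1 : (1:ℚ) ≤ (l:ℚ) := by exact_mod_cast hl
  have hlne : (2 * (l:ℚ) - 1) ≠ 0 := by nlinarith
  rw [← Finset.Ico_add_one_right_eq_Icc, Finset.sum_Ico_eq_sum_range]
  have hrange : l + m + 1 - l = m + 1 := by omega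
  rw [hrange]
  cases m with
  | zero =>
    simp [hlne]
  | succ m =>
    rw [Finset.sum_range_succ']
    have hfirst : (-1 : ℚ) ^ (l+0) / (2 * ((l+0 : ℕ) : ℚ) - 1) *
        (Nat.choose (2 * (l + (m+1)) - 1) ((l + (m+1)) - (l+0)) : ℚ) *
          (2 * (2 * ((l+0 : ℕ) : ℚ) - 1) / (2 * (l : ℚ) - 1)) ^ (if l+0 = l then 0 else 1)
        = (-1:ℚ)^l / (2*(l:ℚ)-1) * (Nat.choose (2*l+2*m+1) (m+1) : ℚ) := by
      have : (l + (m+1)) - (l+0) = m+1 := by omega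
      have h2 : 2 * (l + (m+1)) - 1 = 2*l+2*m+1 := by omega
      rw [this, h2]
      simp
    have hrest : ∀ i ∈ Finset.range (m+1),
        (-1 : ℚ) ^ (l+(i+1)) / (2 * ((l+(i+1) : ℕ) : ℚ) - 1) *
          (Nat.choose (2 * (l + (m+1)) - 1) ((l + (m+1)) - (l+(i+1))) : ℚ) *
            (2 * (2 * ((l+(i+1) : ℕ) : ℚ) - 1) / (2 * (l : ℚ) - 1)) ^ (if l+(i+1) = l then 0 else 1)
        = (-1:ℚ)^l * (2 / (2*(l:ℚ)-1)) * ((-1:ℚ)^(i+1) * (Nat.choose (2*l+2*m+1) (m-i) : ℚ)) := by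
      intro i _
      have hne : l + (i+1) ≠ l := by omega
      have h2 : 2 * (l + (m+1)) - 1 = 2*l+2*m+1 := by omega
      have h3 : (l + (m+1)) - (l+(i+1)) = m - i := by omega
      rw [if_neg hne, h2, h3, pow_one]
      have hk : (2 * ((l+(i+1) : ℕ) : ℚ) - 1) ≠ 0 := by push_cast; nlinarith
      have cancel : ∀ a c d e : ℚ, d ≠ 0 → a/d*c*(2*d/e) = a*(2/e)*c := by
        intro a c d e hd
        rw [div_mul_eq_mul_div, div_mul_div_comm, mul_comm d e,
          show a * c * (2 * d) = a * 2 * c * d by ring,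
          mul_div_mul_right _ _ hd]
        ring
      rw [cancel _ _ _ _ hk, pow_add]
      push_cast
      ring
    rw [Finset.sum_congr rfl hrest, ← Finset.mul_sum]
    have h21 : 2*l+2*m+1 = (2*l+2*m) + 1 := by omega
    rw [h21, lemB (2*l+2*m) m, hfirst]
    have hchoose : ((2*l+2*m+1) : ℚ) * ((2*l+2*m).choose m : ℚ)
        = ((2*l+2*m+1).choose (m+1) : ℚ) * (m+1) := by
      exact_mod_cast congrArg (Nat.cast : ℕ → ℚ) (Nat.add_one_mul_choose_eq (2*l+2*m) m)
    have h2 : 2 * (l + (m+1)) - 1 = 2*l+2*m+1 := by omega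
    have hnn : (2 * ((l + (m+1) : ℕ) : ℚ) - 1) ≠ 0 := by push_cast; nlinarith
    rw [h2]
    have hlm : ((l + (m+1) : ℕ) : ℚ) = (l:ℚ) + m + 1 := by push_cast; ring
    rw [hlm] at hnn ⊢
    rw [show l + (m+1) - l = m+1 by omega]
    field_simp
    push_cast at hchoose ⊢
    linear_combination (-2:ℚ) * hchoose
end

section
/- For any positive integers n, l with n ≥ l and any nonnegative integer c, define V(k,l,c) = (2k-1)/(2l-1) · sum over chains k ≥ l_1 ≥ ... ≥ l_c ≥ l of 2^{Δ(k,l_1)+Δ(l_1,l_2)+...+Δ(l_c,l)} / ((2l_1-1)···(2l_c-1)) for c ≥ 1, and V(k,l,0) = (2·(2k-1)/(2l-1))^{Δ(k,l)}, where Δ(a,b) is 0 if a=b and 1 otherwise. Then: sum over k from l to n of [(-1)^k/(2k-1)]·binom(2n-1, n-k)·V(k,l,c) = (-1)^l/(2n-1)^{c+1}·binom(2n-1, n-l). -/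
/-- `Vsharp k l c` is `V^#_{k,l}({1}^c)` from the paper: for `c ≥ 1` it is
`(2k-1)/(2l-1)` times the sum over chains `k ≥ l₁ ≥ ⋯ ≥ l_c ≥ l` of
`2^{Δ(k,l₁)+Δ(l₁,l₂)+⋯+Δ(l_c,l)} / ((2l₁-1)⋯(2l_c-1))`, and for `c = 0` it is
`(2·(2k-1)/(2l-1))^{Δ(k,l)}`, where `Δ(a,b)` is the indicator that `a ≠ b`. -/
noncomputable def Vsharp (k l : ℕ) : ℕ → ℚ
  | 0 => (2 * (2 * (k : ℚ) - 1) / (2 * (l : ℚ) - 1)) ^ (if k = l then 0 else 1)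
  | (c + 1) =>
      (2 * (k : ℚ) - 1) / (2 * (l : ℚ) - 1) *
        ∑ t ∈ Finset.filter (fun t : Fin (c + 1) → ℕ => ∀ i j : Fin (c + 1), i ≤ j → t j ≤ t i)
            (Fintype.piFinset fun _ => Finset.Icc l k),
          (2 : ℚ) ^ ((if k = t 0 then 0 else 1) +
              ∑ i : Fin (c + 1),
                (if t i = (if h : (i : ℕ) + 1 < c + 1 then t ⟨(i : ℕ) + 1, h⟩ else l)
                  then 0 else 1)) /
            ∏ i : Fin (c + 1), (2 * (t i : ℚ) - 1)



lemma two_mul_sub_one_ne (m : ℕ) : (2 * (m : ℚ) - 1) ≠ 0 := by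
  intro h
  have h2 : ((2 * m : ℕ) : ℚ) = 1 := by push_cast; linarith
  have h3 : 2 * m = 1 := by exact_mod_cast h2
  omega

/-- weight of a chain -/
noncomputable def chainW (l k : ℕ) : ∀ {n : ℕ}, (Fin n → ℕ) → ℚ
  | 0, _ => (2 : ℚ) ^ (if k = l then 0 else 1)
  | (n + 1), t =>
      (2 : ℚ) ^ ((if k = t 0 then 0 else 1) +
          ∑ i : Fin (n + 1),
            (if t i = (if h : (i : ℕ) + 1 < n + 1 then t ⟨(i : ℕ) + 1, h⟩ else l)
              then 0 else 1)) /
        ∏ i : Fin (n + 1), (2 * (t i : ℚ) - 1)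

noncomputable def chainS (l k n : ℕ) : ℚ :=
  ∑ t ∈ Finset.filter (fun t : Fin n → ℕ => ∀ i j : Fin n, i ≤ j → t j ≤ t i)
      (Fintype.piFinset fun _ => Finset.Icc l k), chainW l k t

lemma chainS_zero (l k : ℕ) : chainS l k 0 = (2 : ℚ) ^ (if k = l then 0 else 1) := by
  simp [chainS, chainW]

lemma chainW_cons (l k m : ℕ) {n : ℕ} (s : Fin n → ℕ) :
    chainW l k (Fin.cons m s : Fin (n + 1) → ℕ) =
      (2 : ℚ) ^ (if k = m then 0 else 1) / (2 * (m : ℚ) - 1) * chainW l m s := by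
  cases n with
  | zero =>
      simp only [chainW, Fin.prod_univ_one, Fin.cons_zero]
      have hs : (∑ i : Fin (0 + 1),
          (if (Fin.cons m s : Fin 1 → ℕ) i =
              (if h : (i : ℕ) + 1 < 0 + 1 then (Fin.cons m s : Fin 1 → ℕ) ⟨(i : ℕ) + 1, h⟩ else l)
            then 0 else 1)) = (if m = l then 0 else 1) := by
        simp [Fin.sum_univ_one]
      have hp : (∏ i : Fin (0 + 1), (2 * ((Fin.cons m s : Fin 1 → ℕ) i : ℚ) - 1)) = 2 * (m : ℚ) - 1 := by
        simp
      rw [hs, hp, pow_add]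
      ring
  | succ n =>
      simp only [chainW]
      have h0 : (Fin.cons m s : Fin (n + 2) → ℕ) 0 = m := rfl
      have hsum : (∑ i : Fin (n + 2),
          (if (Fin.cons m s : Fin (n+2) → ℕ) i =
              (if h : (i : ℕ) + 1 < n + 2 then (Fin.cons m s : Fin (n+2) → ℕ) ⟨(i : ℕ) + 1, h⟩ else l)
            then 0 else 1)) =
          (if m = s 0 then 0 else 1) +
          ∑ i : Fin (n + 1),
            (if s i = (if h : (i : ℕ) + 1 < n + 1 then s ⟨(i : ℕ) + 1, h⟩ else l) then 0 else 1) := by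
        rw [Fin.sum_univ_succ]
        refine congrArg₂ (· + ·) ?_ ?_
        · have h1 : ((0 : Fin (n+2)) : ℕ) + 1 < n + 2 := by simp
          rw [dif_pos h1]
          have : (Fin.cons m s : Fin (n+2) → ℕ) ⟨((0 : Fin (n+2)) : ℕ) + 1, h1⟩ = s 0 := rfl
          rw [h0, this]
        · apply Finset.sum_congr rfl
          intro i _
          have hc : (Fin.cons m s : Fin (n+2) → ℕ) i.succ = s i := rfl
          rw [hc]
          by_cases h : (i : ℕ) + 1 < n + 1
          · have h' : ((i.succ : Fin (n+2)) : ℕ) + 1 < n + 2 := by rw [Fin.val_succ]; omega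
            rw [dif_pos h', dif_pos h]
            have : (Fin.cons m s : Fin (n+2) → ℕ) ⟨((i.succ : Fin (n+2)) : ℕ) + 1, h'⟩ =
                s ⟨(i : ℕ) + 1, h⟩ := by
              have : (⟨((i.succ : Fin (n+2)) : ℕ) + 1, h'⟩ : Fin (n+2)) =
                  Fin.succ ⟨(i : ℕ) + 1, h⟩ := by
                apply Fin.ext; simp
              rw [this, Fin.cons_succ]
            rw [this]
          · have h' : ¬ (((i.succ : Fin (n+2)) : ℕ) + 1 < n + 2) := by rw [Fin.val_succ]; omega
            rw [dif_neg h', dif_neg h]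
      have hprod : (∏ i : Fin (n + 2), (2 * ((Fin.cons m s : Fin (n+2) → ℕ) i : ℚ) - 1)) =
          (2 * (m : ℚ) - 1) * ∏ i : Fin (n + 1), (2 * (s i : ℚ) - 1) := by
        rw [Fin.prod_univ_succ]
        simp [Fin.cons_succ]
      rw [h0, hsum, hprod, pow_add, pow_add]
      field_simp

lemma chainS_succ (l k n : ℕ) :
    chainS l k (n + 1) =
      ∑ m ∈ Finset.Icc l k,
        (2 : ℚ) ^ (if k = m then 0 else 1) / (2 * (m : ℚ) - 1) * chainS l m n := by
  unfold chainS
  simp_rw [Finset.mul_sum]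
  rw [Finset.sum_sigma']
  refine Finset.sum_nbij' (fun t => ⟨t 0, Fin.tail t⟩)
    (fun p => Fin.cons p.1 p.2) ?_ ?_ ?_ ?_ ?_
  · intro t ht
    simp only [Finset.mem_filter, Fintype.mem_piFinset, Finset.mem_Icc] at ht
    obtain ⟨hmem, hanti⟩ := ht
    simp only [Finset.mem_sigma, Finset.mem_filter, Fintype.mem_piFinset, Finset.mem_Icc]
    refine ⟨hmem 0, ⟨?_, ?_⟩⟩
    · intro i
      exact ⟨(hmem i.succ).1, hanti 0 i.succ (Fin.zero_le _)⟩
    · intro i j hij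
      exact hanti i.succ j.succ (Fin.le_def.mpr (by
        rw [Fin.val_succ, Fin.val_succ]
        exact Nat.add_le_add_right (Fin.le_def.mp hij) 1))
  · intro p hp
    simp only [Finset.mem_sigma, Finset.mem_filter, Fintype.mem_piFinset, Finset.mem_Icc] at hp
    obtain ⟨hm, hmem, hanti⟩ := hp
    simp only [Finset.mem_filter, Fintype.mem_piFinset, Finset.mem_Icc]
    constructor
    · intro i
      induction i using Fin.cases with
      | zero => simpa using hm
      | succ i' => simp only [Fin.cons_succ]; exact ⟨(hmem i').1, le_trans (hmem i').2 hm.2⟩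
    · intro i j hij
      induction i using Fin.cases with
      | zero =>
          induction j using Fin.cases with
          | zero => exact le_refl _
          | succ j' => simp only [Fin.cons_succ, Fin.cons_zero]; exact (hmem j').2
      | succ i' =>
          induction j using Fin.cases with
          | zero =>
              exfalso
              have := Fin.le_def.mp hij
              simp at this
          | succ j' =>
              simp only [Fin.cons_succ]
              exact hanti i' j' (by
                have := Fin.le_def.mp hij
                simp only [Fin.val_succ] at this
                exact Fin.le_def.mpr (by omega))
  · intro t _
    exact Fin.cons_self_tail t
  · intro p _
    simp [Fin.tail_cons]
  · intro t _
    conv_lhs => rw [← Fin.cons_self_tail t]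
    rw [chainW_cons]

lemma alt_sum_choose (n : ℕ) (hn : 1 ≤ n) :
    ∀ j, j ≤ n →
      (∑ k ∈ Finset.Icc (n - j) n, (-1 : ℚ) ^ k * (Nat.choose (2 * n - 1) (n - k) : ℚ)) =
        (-1 : ℚ) ^ (n - j) * (Nat.choose (2 * n - 2) j : ℚ) := by
  intro j
  induction j with
  | zero => simp
  | succ j ih =>
      intro hj
      have hj' : j ≤ n := by omega
      have hsplit : Finset.Icc (n - (j + 1)) n =
          insert (n - (j + 1)) (Finset.Icc (n - j) n) := by
        have h : n - j = (n - (j + 1)) + 1 := by omega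
        rw [h, Finset.Icc_add_one_left_eq_Ioc, Finset.Ioc_insert_left (by omega)]
      rw [hsplit, Finset.sum_insert (by simp [Finset.mem_Icc]; omega), ih hj']
      have h1 : n - (n - (j + 1)) = j + 1 := by omega
      rw [h1]
      have hpas : (Nat.choose (2 * n - 1) (j + 1) : ℚ) =
          (Nat.choose (2 * n - 2) j : ℚ) + (Nat.choose (2 * n - 2) (j + 1) : ℚ) := by
        have : 2 * n - 1 = (2 * n - 2) + 1 := by omega
        rw [this, Nat.choose_succ_succ']
        push_cast
        ring
      rw [hpas]
      have h2 : (-1 : ℚ) ^ (n - (j+1)) * (-1 : ℚ) = (-1 : ℚ) ^ (n - j) := by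
        have : n - j = (n - (j+1)) + 1 := by omega
        rw [this, pow_succ]
      have h3 : (-1 : ℚ) ^ (n - j) = (-1 : ℚ) ^ (n - (j+1)) * (-1 : ℚ) := h2.symm
      rw [h3]
      ring

lemma two_mul_sub_one_ne' (m : ℕ) : (2 * (m : ℚ) - 1) ≠ 0 := by
  intro h
  have h2 : ((2 * m : ℕ) : ℚ) = 1 := by push_cast; linarith
  have h3 : 2 * m = 1 := by exact_mod_cast h2
  omega

lemma key_sum (n m : ℕ) (hm : 1 ≤ m) (hmn : m ≤ n) :
    ∑ k ∈ Finset.Icc m n,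
        (-1 : ℚ) ^ k * (Nat.choose (2 * n - 1) (n - k) : ℚ) * (2 : ℚ) ^ (if k = m then 0 else 1)
      = (-1 : ℚ) ^ m * (2 * (m : ℚ) - 1) / (2 * (n : ℚ) - 1) * (Nat.choose (2 * n - 1) (n - m) : ℚ) := by
  have hn : 1 ≤ n := le_trans hm hmn
  have hstep : ∀ k, (-1 : ℚ) ^ k * (Nat.choose (2 * n - 1) (n - k) : ℚ) * (2 : ℚ) ^ (if k = m then 0 else 1)
      = 2 * ((-1 : ℚ) ^ k * (Nat.choose (2 * n - 1) (n - k) : ℚ))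
        - (if k = m then (-1 : ℚ) ^ k * (Nat.choose (2 * n - 1) (n - k) : ℚ) else 0) := by
    intro k
    split_ifs <;> norm_num <;> ring
  rw [Finset.sum_congr rfl (fun k _ => hstep k), Finset.sum_sub_distrib, ← Finset.mul_sum,
    Finset.sum_ite_eq' (Finset.Icc m n) m]
  have hmem : m ∈ Finset.Icc m n := Finset.mem_Icc.mpr ⟨le_refl m, hmn⟩
  rw [if_pos hmem]
  have halt := alt_sum_choose n hn (n - m) (by omega)
  have hnm : n - (n - m) = m := by omega
  rw [hnm] at halt
  rw [halt]
  -- now the algebraic identity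
  have hnat := Nat.choose_mul_succ_eq (2 * n - 2) (n - m)
  have e1 : 2 * n - 2 + 1 = 2 * n - 1 := by omega
  have e2 : 2 * n - 1 - (n - m) = n + m - 1 := by omega
  rw [e1, e2] at hnat
  have hq : ((Nat.choose (2 * n - 2) (n - m) : ℚ)) * (2 * (n : ℚ) - 1)
      = (Nat.choose (2 * n - 1) (n - m) : ℚ) * ((n : ℚ) + (m : ℚ) - 1) := by
    have := congrArg (fun x : ℕ => (x : ℚ)) hnat
    push_cast at this
    rw [Nat.cast_sub (by omega : 1 ≤ 2 * n), Nat.cast_sub (by omega : 1 ≤ n + m)] at this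
    push_cast at this
    linarith [this]
  have hne : (2 * (n : ℚ) - 1) ≠ 0 := two_mul_sub_one_ne' n
  field_simp
  linear_combination 2 * hq

lemma tri_swap (a b : ℕ) (F : ℕ → ℕ → ℚ) :
    ∑ k ∈ Finset.Icc a b, ∑ m ∈ Finset.Icc a k, F k m
      = ∑ m ∈ Finset.Icc a b, ∑ k ∈ Finset.Icc m b, F k m := by
  rw [Finset.sum_sigma', Finset.sum_sigma']
  refine Finset.sum_nbij' (fun x => ⟨x.2, x.1⟩) (fun x => ⟨x.2, x.1⟩) ?_ ?_ (fun _ _ => rfl)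
      (fun _ _ => rfl) (fun _ _ => rfl) <;>
    simp only [Finset.mem_Icc, Sigma.forall, Finset.mem_sigma] <;>
    rintro a b ⟨⟨h₁, h₂⟩, ⟨h₃, h₄⟩⟩ <;>
    omega

lemma T_lemma (n l : ℕ) (hl : 1 ≤ l) (hln : l ≤ n) (c : ℕ) :
    ∑ k ∈ Finset.Icc l n, (-1 : ℚ) ^ k * (Nat.choose (2 * n - 1) (n - k) : ℚ) * chainS l k c
      = (-1 : ℚ) ^ l * (2 * (l : ℚ) - 1) / (2 * (n : ℚ) - 1) ^ (c + 1) *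
          (Nat.choose (2 * n - 1) (n - l) : ℚ) := by
  induction c with
  | zero =>
      have h0 : ∀ k ∈ Finset.Icc l n,
          (-1 : ℚ) ^ k * (Nat.choose (2 * n - 1) (n - k) : ℚ) * chainS l k 0
            = (-1 : ℚ) ^ k * (Nat.choose (2 * n - 1) (n - k) : ℚ) *
                (2 : ℚ) ^ (if k = l then 0 else 1) := by
        intro k _; rw [chainS_zero]
      rw [Finset.sum_congr rfl h0, key_sum n l hl hln, pow_one]
  | succ c ih =>
      have hne : (2 * (n : ℚ) - 1) ≠ 0 := two_mul_sub_one_ne' n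
      have step1 : ∑ k ∈ Finset.Icc l n,
          (-1 : ℚ) ^ k * (Nat.choose (2 * n - 1) (n - k) : ℚ) * chainS l k (c + 1)
          = ∑ k ∈ Finset.Icc l n, ∑ m ∈ Finset.Icc l k,
              (-1 : ℚ) ^ k * (Nat.choose (2 * n - 1) (n - k) : ℚ) *
                ((2 : ℚ) ^ (if k = m then 0 else 1) / (2 * (m : ℚ) - 1) * chainS l m c) := by
        apply Finset.sum_congr rfl
        intro k _
        rw [chainS_succ, Finset.mul_sum]
      rw [step1, tri_swap]
      have step2 : ∀ m ∈ Finset.Icc l n,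
          (∑ k ∈ Finset.Icc m n,
            (-1 : ℚ) ^ k * (Nat.choose (2 * n - 1) (n - k) : ℚ) *
              ((2 : ℚ) ^ (if k = m then 0 else 1) / (2 * (m : ℚ) - 1) * chainS l m c))
          = 1 / (2 * (n : ℚ) - 1) *
              ((-1 : ℚ) ^ m * (Nat.choose (2 * n - 1) (n - m) : ℚ) * chainS l m c) := by
        intro m hm
        obtain ⟨hlm, hmn⟩ := Finset.mem_Icc.mp hm
        have hme : (2 * (m : ℚ) - 1) ≠ 0 := two_mul_sub_one_ne' m
        have h1 : ∀ k ∈ Finset.Icc m n,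
            (-1 : ℚ) ^ k * (Nat.choose (2 * n - 1) (n - k) : ℚ) *
              ((2 : ℚ) ^ (if k = m then 0 else 1) / (2 * (m : ℚ) - 1) * chainS l m c)
            = ((-1 : ℚ) ^ k * (Nat.choose (2 * n - 1) (n - k) : ℚ) *
                (2 : ℚ) ^ (if k = m then 0 else 1)) * (chainS l m c / (2 * (m : ℚ) - 1)) := by
          intro k _; ring
        rw [Finset.sum_congr rfl h1, ← Finset.sum_mul, key_sum n m (le_trans hl hlm) hmn]
        field_simp
      rw [Finset.sum_congr rfl step2, ← Finset.mul_sum, ih, pow_succ]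
      field_simp
      ring

lemma Vsharp_eq_chainS (k l c : ℕ) :
    Vsharp k l c = (2 * (k : ℚ) - 1) / (2 * (l : ℚ) - 1) * chainS l k c := by
  cases c with
  | zero =>
      rw [chainS_zero]
      by_cases h : k = l
      · subst h
        simp [Vsharp, div_self (two_mul_sub_one_ne' k)]
      · simp only [Vsharp, if_neg h, pow_one]
        ring
  | succ c =>
      simp only [Vsharp, chainS, chainW]

theorem sum_alt_choose_Vsharp (n l c : ℕ) (hl : 0 < l) (hn : l ≤ n) :
    ∑ k ∈ Finset.Icc l n,
        (-1 : ℚ) ^ k / (2 * (k : ℚ) - 1) * (Nat.choose (2 * n - 1) (n - k) : ℚ) *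
          Vsharp k l c =
      (-1 : ℚ) ^ l / (2 * (n : ℚ) - 1) ^ (c + 1) * (Nat.choose (2 * n - 1) (n - l) : ℚ) := by
  have hT := T_lemma n l hl hn c
  have hcong : ∀ k ∈ Finset.Icc l n,
      (-1 : ℚ) ^ k / (2 * (k : ℚ) - 1) * (Nat.choose (2 * n - 1) (n - k) : ℚ) * Vsharp k l c
        = 1 / (2 * (l : ℚ) - 1) *
            ((-1 : ℚ) ^ k * (Nat.choose (2 * n - 1) (n - k) : ℚ) * chainS l k c) := by
    intro k _
    rw [Vsharp_eq_chainS]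
    have hk := two_mul_sub_one_ne' k
    have hle := two_mul_sub_one_ne' l
    field_simp
  rw [Finset.sum_congr rfl hcong, ← Finset.mul_sum, hT]
  have hle := two_mul_sub_one_ne' l
  have hne : ((2 * (n : ℚ) - 1) ^ (c + 1)) ≠ 0 := pow_ne_zero _ (two_mul_sub_one_ne' n)
  field_simp
end

section
/- For any positive integer n, the product over k from 1 to n of (2k-1)^2/((2k-1)^2 - z^2), for any complex number z with |z| < 1, equals [(2n-1)!!]^2 · sum over k from 1 to n of [2(-1)^{k-1}(2k-1) / ((2n-2k)!!·(2n+2k-2)!!)] · 1/((2k-1)^2 - z^2). -/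
/-!
With `a_k = (2k+1)²`, the left side is `∏ a_k · ∏ (a_k - z²)⁻¹`, and partial fractions with the
simple poles `a_k` (the Lagrange interpolation of the constant `1`) give
`∏ (a_k - z²)⁻¹ = ∑_j (∏_{i ≠ j} (a_i - a_j))⁻¹ (a_j - z²)⁻¹`. Since
`a_i - a_j = (2i - 2j)(2i + 2j + 2)`, the node products split into products of even numbers,
i.e. double factorials.
-/

open scoped Nat
open Finset Polynomial

namespace Lagrange

variable {F ι : Type*} [Field F] [DecidableEq ι] {s : Finset ι} {v : ι → F} {x : F}

theorem prod_inv_sub_eq_sum (hvs : Set.InjOn v s) (hs : s.Nonempty) (hx : ∀ i ∈ s, v i ≠ x) :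
    ∏ i ∈ s, (v i - x)⁻¹ = ∑ i ∈ s, (∏ j ∈ s.erase i, (v j - v i))⁻¹ * (v i - x)⁻¹ := by
  -- Lagrange interpolation of `1` at the nodes `-v`, evaluated at `-x`.
  have hvs' : Set.InjOn (-v) s := neg_injective.comp_injOn hvs
  have h := eval_interpolate_not_at_node (s := s) (v := -v) (x := -x) 1
    fun i hi h => hx i hi (by simpa using h.symm)
  rw [interpolate_one hvs' hs, eval_one, eval_nodal] at h
  simp only [nodalWeight, Pi.neg_apply, Pi.one_apply, mul_one, neg_sub_neg] at h
  simpa only [prod_inv_distrib] using (eq_inv_of_mul_eq_one_right h.symm).symm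

end Lagrange

namespace Finset

theorem prod_erase_range_add {M : Type*} [CommMonoid M] (f : ℕ → M) (j d : ℕ) :
    ∏ i ∈ (range (j + 1 + d)).erase j, f i =
      (∏ i ∈ range j, f i) * ∏ i ∈ range d, f (j + 1 + i) := by
  induction d with
  | zero =>
    rw [add_zero, range_add_one, erase_insert notMem_range_self, range_zero, prod_empty, mul_one]
  | succ d ih =>
    rw [← add_assoc, range_add_one, erase_insert_of_ne (by omega), prod_insert (by simp), ih,
      prod_range_succ, mul_comm, mul_assoc]

end Finset

namespace Nat

theorem doubleFactorial_two_mul_add (a b : ℕ) :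
    (2 * (a + b))‼ = (2 * a)‼ * ∏ i ∈ range b, 2 * (a + i + 1) := by
  simp only [doubleFactorial_eq_prod_even, prod_range_add, add_assoc]

theorem prod_range_two_mul_add_one (n : ℕ) : ∏ i ∈ range n, (2 * i + 1) = (2 * n - 1)‼ := by
  cases n with
  | zero => rfl
  | succ m => rw [prod_range_succ', show 2 * (m + 1) - 1 = 2 * m + 1 by omega,
      doubleFactorial_eq_prod_odd, mul_zero, zero_add, mul_one]

end Nat

section OddSquares

variable {R : Type*} [CommRing R]

theorem prod_range_odd_sq_sub_odd_sq (j : ℕ) :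
    ∏ i ∈ range j, ((2 * i + 1 : R) ^ 2 - (2 * j + 1) ^ 2) = (-1) ^ j * ((2 * (j + j))‼ : R) := by
  have hterm : ∀ i ∈ range j, (2 * i + 1 : R) ^ 2 - (2 * j + 1) ^ 2 =
      -1 * ((2 * (j - 1 - i + 1) : ℕ) : R) * ((2 * (j + i + 1) : ℕ) : R) := by
    intro i hi
    have hij := mem_range.mp hi
    rw [show j - 1 - i + 1 = j - i by omega]
    push_cast [hij.le]
    ring
  have hreflect := prod_range_reflect (fun i => ((2 * (i + 1) : ℕ) : R)) j
  rw [prod_congr rfl hterm, prod_mul_distrib, prod_mul_distrib, prod_const, card_range, hreflect,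
    Nat.doubleFactorial_two_mul_add, Nat.doubleFactorial_eq_prod_even]
  push_cast
  ring

theorem doubleFactorial_mul_prod_range_odd_sq_sub_odd_sq (j d : ℕ) :
    ((2 * (2 * j + 1))‼ : R) * ∏ i ∈ range d, ((2 * (j + 1 + i : ℕ) + 1 : R) ^ 2 - (2 * j + 1) ^ 2) =
      (2 * d)‼ * (2 * (2 * j + 1 + d))‼ := by
  have hterm : ∀ i : ℕ, (2 * (j + 1 + i : ℕ) + 1 : R) ^ 2 - (2 * j + 1) ^ 2 =
      ((2 * (i + 1) : ℕ) : R) * ((2 * (2 * j + 1 + i + 1) : ℕ) : R) := by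
    intro i
    push_cast
    ring
  simp only [hterm, prod_mul_distrib]
  rw [Nat.doubleFactorial_two_mul_add (2 * j + 1) d, Nat.doubleFactorial_eq_prod_even d]
  push_cast
  ring

theorem prod_erase_range_odd_sq_sub_odd_sq (j d : ℕ) :
    (4 * j + 2 : R) * ∏ i ∈ (range (j + 1 + d)).erase j, ((2 * i + 1 : R) ^ 2 - (2 * j + 1) ^ 2) =
      (-1) ^ j * (2 * d)‼ * (2 * (2 * j + 1 + d))‼ := by
  have hdf : ((2 * (2 * j + 1))‼ : R) = (4 * j + 2) * (2 * (j + j))‼ := by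
    rw [show 2 * (2 * j + 1) = 2 * (j + j) + 2 by ring, Nat.doubleFactorial_add_two]
    push_cast
    ring
  rw [prod_erase_range_add (fun i : ℕ => (2 * (i : R) + 1) ^ 2 - (2 * j + 1) ^ 2),
    prod_range_odd_sq_sub_odd_sq]
  linear_combination (-1) ^ j * doubleFactorial_mul_prod_range_odd_sq_sub_odd_sq (R := R) j d
    - (-1) ^ j * (∏ i ∈ range d, ((2 * (j + 1 + i : ℕ) + 1 : R) ^ 2 - (2 * j + 1) ^ 2)) * hdf

end OddSquares

theorem inv_prod_erase_range_odd_sq_sub_odd_sq {K : Type*} [Field K] [CharZero K] (j d : ℕ) :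
    (∏ i ∈ (range (j + 1 + d)).erase j, ((2 * i + 1 : K) ^ 2 - (2 * j + 1) ^ 2))⁻¹ =
      (2 * (-1) ^ j * (2 * j + 1) / ((2 * d)‼ * (2 * (2 * j + 1 + d))‼) : K) := by
  have hsign : ((-1 : K) ^ j) ^ 2 = 1 := by
    rw [← pow_mul, mul_comm, pow_mul, neg_one_sq, one_pow]
  have hodd : (2 * j + 1 : K) ≠ 0 := by exact_mod_cast (2 * j).succ_ne_zero
  rw [inv_eq_iff_eq_inv, inv_div, eq_div_iff (by simp [hodd])]
  linear_combination (-1) ^ j * prod_erase_range_odd_sq_sub_odd_sq (R := K) j d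
    + ((2 * d)‼ * (2 * (2 * j + 1 + d))‼ : K) * hsign

theorem injective_odd_sq {R : Type*} [Semiring R] [CharZero R] :
    Function.Injective fun i : ℕ => (2 * i + 1 : R) ^ 2 := by
  intro i j (h : (2 * i + 1 : R) ^ 2 = (2 * j + 1) ^ 2)
  have h' : (2 * i + 1) ^ 2 = (2 * j + 1) ^ 2 := by exact_mod_cast h
  have := Nat.pow_left_injective two_ne_zero h'
  omega

theorem Complex.odd_sq_ne_sq_of_norm_lt_one {z : ℂ} (hz : ‖z‖ < 1) (j : ℕ) :
    (2 * j + 1 : ℂ) ^ 2 ≠ z ^ 2 := by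
  intro h
  have hnorm := congrArg norm h
  rw [norm_pow, norm_pow, show (2 * j + 1 : ℂ) = ((2 * j + 1 : ℕ) : ℂ) by push_cast; rfl,
    Complex.norm_natCast] at hnorm
  have hj : (1 : ℝ) ≤ (2 * j + 1 : ℕ) := by exact_mod_cast Nat.succ_pos _
  nlinarith [norm_nonneg z]

theorem partial_fraction_double_factorial (n : ℕ) (hn : 0 < n) (z : ℂ) (hz : ‖z‖ < 1) :
    ∏ k ∈ Finset.Icc 1 n, (2 * (k : ℂ) - 1) ^ 2 / ((2 * (k : ℂ) - 1) ^ 2 - z ^ 2) =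
      ((Nat.doubleFactorial (2 * n - 1) : ℂ)) ^ 2 *
        ∑ k ∈ Finset.Icc 1 n,
          2 * (-1 : ℂ) ^ (k - 1) * (2 * (k : ℂ) - 1) /
              ((Nat.doubleFactorial (2 * n - 2 * k) : ℂ) *
                (Nat.doubleFactorial (2 * n + 2 * k - 2) : ℂ)) *
            (1 / ((2 * (k : ℂ) - 1) ^ 2 - z ^ 2)) := by
  have hodd : ∀ j : ℕ, 2 * ((j + 1 : ℕ) : ℂ) - 1 = 2 * j + 1 := fun j => by push_cast; ring
  have hIcc : Icc 1 n = (range n).map (addRightEmbedding (1 : ℕ)) := by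
    rw [range_eq_Ico, map_add_right_Ico, zero_add, Ico_add_one_right_eq_Icc]
  simp only [hIcc, prod_map, sum_map, addRightEmbedding_apply, hodd, add_tsub_cancel_right,
    div_eq_mul_inv, one_mul, prod_mul_distrib]
  rw [Lagrange.prod_inv_sub_eq_sum injective_odd_sq.injOn (nonempty_range_iff.mpr hn.ne')
      fun j _ => Complex.odd_sq_ne_sq_of_norm_lt_one hz j, prod_pow,
    ← Nat.prod_range_two_mul_add_one]
  push_cast
  congr 1
  refine sum_congr rfl fun j hj => ?_
  obtain ⟨d, rfl⟩ := Nat.exists_eq_add_of_le (mem_range.mp hj)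
  rw [inv_prod_erase_range_odd_sq_sub_odd_sq, show 2 * (j + 1 + d) - 2 * (j + 1) = 2 * d by omega,
    show 2 * (j + 1 + d) + 2 * (j + 1) - 2 = 2 * (2 * j + 1 + d) by omega, div_eq_mul_inv]
end

section
/- For any positive integer n and any complex number z with |z| < 1, the generating function of the multiple t-harmonic sums t*_n({2}^a) satisfies: sum over a ≥ 0 of t*_n({2}^a)·z^{2a} = product over k from 1 to n of (2k-1)^2/((2k-1)^2 - z^2), where t*_n({2}^a) = sum over n ≥ k_1 ≥ ... ≥ k_a ≥ 1 of 1/((2k_1-1)^2···(2k_a-1)^2), with t*_n of the empty index equal to 1. -/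
/-- The multiple `t`-harmonic star sum `t*_n({2}^a)`: the sum over weakly decreasing
tuples `n ≥ k₁ ≥ ⋯ ≥ k_a ≥ 1` of `1/((2k₁-1)²⋯(2k_a-1)²)`; equal to `1` when `a = 0`. -/
noncomputable def tstarnTwo (n a : ℕ) : ℂ :=
  ∑ k ∈ Finset.filter (fun k : Fin a → ℕ => ∀ i j : Fin a, i ≤ j → k j ≤ k i)
      (Fintype.piFinset fun _ => Finset.Icc 1 n),
    ∏ i : Fin a, (1 : ℂ) / (2 * (k i : ℂ) - 1) ^ 2

/-! Splitting off the entries equal to `n + 1` gives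
`t*_{n+1}({2}^a) = ∑_{p+q=a} (2n+1)^{-2p} t*_n({2}^q)`, so passing from `n` to `n + 1` multiplies
the generating function by the geometric series `∑_p (z²/(2n+1)²)^p = (2n+1)²/((2n+1)² - z²)`.
The Cauchy product is legitimate because everything converges absolutely for `‖z‖ < 1 ≤ 2n+1`. -/

open Finset

section GeometricConvolution

variable {K : Type*} [NormedDivisionRing K] {w : K} {f : ℕ → K}

theorem summable_norm_sum_geometric_mul_antidiagonal (hw : ‖w‖ < 1)
    (hf : Summable fun a => ‖f a‖) :
    Summable fun a => ‖∑ p ∈ antidiagonal a, w ^ p.1 * f p.2‖ :=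
  summable_norm_sum_mul_antidiagonal_of_summable_norm
    (summable_norm_geometric_of_norm_lt_one hw) hf

theorem tsum_sum_geometric_mul_antidiagonal [CompleteSpace K] (hw : ‖w‖ < 1)
    (hf : Summable fun a => ‖f a‖) :
    ∑' a, ∑ p ∈ antidiagonal a, w ^ p.1 * f p.2 = (1 - w)⁻¹ * ∑' a, f a := by
  rw [← tsum_geometric_of_norm_lt_one hw,
    tsum_mul_tsum_eq_tsum_sum_antidiagonal_of_summable_norm
      (summable_norm_geometric_of_norm_lt_one hw) hf]

end GeometricConvolution

theorem Fin.antitone_cons {α : Type*} [Preorder α] {n : ℕ} {x : α} {t : Fin n → α} :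
    Antitone (Fin.cons x t : Fin (n + 1) → α) ↔ (∀ i, t i ≤ x) ∧ Antitone t := by
  simp only [antitone_iff_forall_lt]
  exact Fin.liftFun_cons (· ≥ ·)

def antitoneTuples (n a : ℕ) : Finset (Fin a → ℕ) :=
  {k ∈ Fintype.piFinset fun _ => Icc 1 n | ∀ i j : Fin a, i ≤ j → k j ≤ k i}

theorem mem_antitoneTuples {n a : ℕ} {k : Fin a → ℕ} :
    k ∈ antitoneTuples n a ↔ (∀ i, k i ∈ Icc 1 n) ∧ Antitone k := by
  simp [antitoneTuples, Antitone]

theorem antitoneTuples_zero_left {a : ℕ} (ha : a ≠ 0) : antitoneTuples 0 a = ∅ := by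
  obtain ⟨a, rfl⟩ := Nat.exists_eq_succ_of_ne_zero ha
  ext k
  simp only [mem_antitoneTuples, notMem_empty, iff_false, not_and]
  exact fun hk _ => by simpa using hk 0

theorem filter_head_ne_antitoneTuples (n a : ℕ) :
    {k ∈ antitoneTuples (n + 1) (a + 1) | k 0 ≠ n + 1} = antitoneTuples n (a + 1) := by
  ext k
  simp only [mem_filter, mem_antitoneTuples, mem_Icc]
  constructor
  · rintro ⟨⟨hk, hanti⟩, hne⟩
    exact ⟨fun i => ⟨(hk i).1, (hanti (Fin.zero_le i)).trans (by grind)⟩, hanti⟩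
  · rintro ⟨hk, hanti⟩
    exact ⟨⟨fun i => ⟨(hk i).1, (hk i).2.trans n.le_succ⟩, hanti⟩, by grind⟩

theorem filter_head_eq_antitoneTuples (n a : ℕ) :
    {k ∈ antitoneTuples (n + 1) (a + 1) | k 0 = n + 1} =
      (antitoneTuples (n + 1) a).map ⟨Fin.cons (n + 1), Fin.cons_right_injective _⟩ := by
  ext k
  obtain ⟨x, t, rfl⟩ : ∃ x t, k = Fin.cons x t := ⟨_, _, (Fin.cons_self_tail k).symm⟩
  simp only [mem_filter, mem_map, mem_antitoneTuples, Fin.antitone_cons, Fin.forall_fin_succ,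
    Fin.cons_zero, Fin.cons_succ, Function.Embedding.coeFn_mk, Fin.cons_inj, mem_Icc]
  constructor
  · rintro ⟨⟨⟨-, ht⟩, -, hanti⟩, rfl⟩
    exact ⟨t, ⟨ht, hanti⟩, rfl, rfl⟩
  · rintro ⟨_, ⟨ht, hanti⟩, rfl, rfl⟩
    exact ⟨⟨⟨⟨by omega, le_rfl⟩, ht⟩, fun i => (ht i).2, hanti⟩, rfl⟩


noncomputable def invOddSq (k : ℕ) : ℂ := 1 / (2 * (k : ℂ) - 1) ^ 2

theorem tstarnTwo_eq_sum_antitoneTuples (n a : ℕ) :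
    tstarnTwo n a = ∑ k ∈ antitoneTuples n a, ∏ i, invOddSq (k i) := rfl

theorem tstarnTwo_zero_right (n : ℕ) : tstarnTwo n 0 = 1 := by
  simp [tstarnTwo]

theorem tstarnTwo_zero_left {a : ℕ} (ha : a ≠ 0) : tstarnTwo 0 a = 0 := by
  rw [tstarnTwo_eq_sum_antitoneTuples, antitoneTuples_zero_left ha, sum_empty]

theorem tstarnTwo_succ_succ (n a : ℕ) :
    tstarnTwo (n + 1) (a + 1) = tstarnTwo n (a + 1) + invOddSq (n + 1) * tstarnTwo (n + 1) a := by
  simp only [tstarnTwo_eq_sum_antitoneTuples]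
  rw [← sum_filter_not_add_sum_filter _ (fun k => k 0 = n + 1), filter_head_ne_antitoneTuples,
    filter_head_eq_antitoneTuples, sum_map, mul_sum]
  congr 1
  refine sum_congr rfl fun t _ => ?_
  simp [Fin.prod_univ_succ]

theorem tstarnTwo_succ_left (n a : ℕ) :
    tstarnTwo (n + 1) a = ∑ p ∈ antidiagonal a, invOddSq (n + 1) ^ p.1 * tstarnTwo n p.2 := by
  induction a with
  | zero => simp [tstarnTwo_zero_right]
  | succ a ih =>
    rw [tstarnTwo_succ_succ, ih, Nat.sum_antidiagonal_succ, mul_sum]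
    simp only [pow_zero, one_mul, pow_succ', mul_assoc]

theorem tstarnTwo_succ_left_mul_pow (n a : ℕ) (z : ℂ) :
    tstarnTwo (n + 1) a * z ^ (2 * a) =
      ∑ p ∈ antidiagonal a, (invOddSq (n + 1) * z ^ 2) ^ p.1 * (tstarnTwo n p.2 * z ^ (2 * p.2)) := by
  rw [tstarnTwo_succ_left, sum_mul]
  refine sum_congr rfl fun p hp => ?_
  rw [← mem_antidiagonal.mp hp]
  ring

theorem one_le_norm_two_mul_natCast_sub_one (k : ℕ) : 1 ≤ ‖2 * (k : ℂ) - 1‖ := by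
  have hcast : 2 * (k : ℂ) - 1 = ((2 * k - 1 : ℤ) : ℂ) := by push_cast; ring
  rw [hcast, Complex.norm_intCast]
  exact_mod_cast Int.one_le_abs (z := 2 * k - 1) (by omega)

theorem norm_invOddSq_le_one (k : ℕ) : ‖invOddSq k‖ ≤ 1 := by
  rw [invOddSq, norm_div, norm_one, norm_pow]
  exact div_le_one_of_le₀ (one_le_pow₀ (one_le_norm_two_mul_natCast_sub_one k)) (by positivity)

theorem norm_invOddSq_mul_sq_lt_one (k : ℕ) {z : ℂ} (hz : ‖z‖ < 1) : ‖invOddSq k * z ^ 2‖ < 1 := by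
  rw [norm_mul, norm_pow]
  exact mul_lt_one_of_nonneg_of_lt_one_right (norm_invOddSq_le_one k) (by positivity)
    (pow_lt_one₀ (norm_nonneg z) hz two_ne_zero)

theorem inv_one_sub_invOddSq_mul (k : ℕ) (z : ℂ) :
    (1 - invOddSq k * z ^ 2)⁻¹ = (2 * (k : ℂ) - 1) ^ 2 / ((2 * (k : ℂ) - 1) ^ 2 - z ^ 2) := by
  have hk : (2 * (k : ℂ) - 1) ^ 2 ≠ 0 :=
    pow_ne_zero 2 (norm_pos_iff.mp (one_pos.trans_le (one_le_norm_two_mul_natCast_sub_one k)))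
  rw [invOddSq, one_div_mul_eq_div, one_sub_div hk, inv_div]

theorem summable_norm_tstarnTwo_mul_pow (n : ℕ) {z : ℂ} (hz : ‖z‖ < 1) :
    Summable fun a => ‖tstarnTwo n a * z ^ (2 * a)‖ := by
  induction n with
  | zero =>
    exact summable_of_ne_finset_zero (s := {0}) fun a ha => by
      simp [tstarnTwo_zero_left (by simpa using ha)]
  | succ n ih =>
    simpa only [tstarnTwo_succ_left_mul_pow] using
      summable_norm_sum_geometric_mul_antidiagonal (norm_invOddSq_mul_sq_lt_one (n + 1) hz) ih

theorem tsum_tstarnTwo_mul_pow (n : ℕ) {z : ℂ} (hz : ‖z‖ < 1) :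
    ∑' a, tstarnTwo n a * z ^ (2 * a) = ∏ k ∈ Icc 1 n, (1 - invOddSq k * z ^ 2)⁻¹ := by
  induction n with
  | zero =>
    rw [tsum_eq_single 0 fun a ha => by simp [tstarnTwo_zero_left ha]]
    simp [tstarnTwo_zero_right]
  | succ n ih =>
    simp_rw [tstarnTwo_succ_left_mul_pow]
    rw [tsum_sum_geometric_mul_antidiagonal (norm_invOddSq_mul_sq_lt_one (n + 1) hz)
      (summable_norm_tstarnTwo_mul_pow n hz), ih, prod_Icc_succ_top (by omega), mul_comm]

theorem generating_function_tstarn_twos_general (n : ℕ) (z : ℂ)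
    (hz : ‖z‖ < 1) :
    ∑' a : ℕ, tstarnTwo n a * z ^ (2 * a) =
      ∏ k ∈ Finset.Icc 1 n, (2 * (k : ℂ) - 1) ^ 2 / ((2 * (k : ℂ) - 1) ^ 2 - z ^ 2) := by
  rw [tsum_tstarnTwo_mul_pow n hz]
  exact prod_congr rfl fun k _ => inv_one_sub_invOddSq_mul k z

theorem generating_function_tstarn_twos (n : ℕ) (hn : 0 < n) (z : ℂ)
    (hz : ‖z‖ < 1) :
    ∑' a : ℕ, tstarnTwo n a * z ^ (2 * a) =
      ∏ k ∈ Finset.Icc 1 n, (2 * (k : ℂ) - 1) ^ 2 / ((2 * (k : ℂ) - 1) ^ 2 - z ^ 2) :=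
  generating_function_tstarn_twos_general n z hz
end

section
/- For all positive integers n and k with k ≤ n: 2/π - (n/2^{4n-2})·binom(2n,n)·binom(2n-1,n-k) > 0, and moreover 2/π - (n/2^{4n-2})·binom(2n,n)·binom(2n-1,n-k) < 4k²/(πn). -/
open Real Filter Finset

noncomputable def Wq (n : ℕ) : ℝ := (Nat.choose (2*n) n : ℝ) / 4^n

lemma Wq_pos (n : ℕ) : 0 < Wq n := by
  apply div_pos
  · exact_mod_cast Nat.choose_pos (by omega)
  · positivity

lemma Wq_succ (n : ℕ) : Wq (n+1) = Wq n * (2*n+1) / (2*n+2) := by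
  have h' : ((n:ℝ) + 1) * (Nat.choose (2*(n+1)) (n+1) : ℝ) = 2 * (2*n+1) * (Nat.choose (2*n) n : ℝ) := by
    exact_mod_cast Nat.succ_mul_centralBinom_succ n
  have h4 : (4:ℝ)^(n+1) = 4 * 4^n := by ring
  unfold Wq
  field_simp
  rw [h4]
  linear_combination (2*(4:ℝ)^n) * h'

lemma Wq_prod (k : ℕ) :
    (∏ i ∈ Finset.range k, ((2 * (i:ℝ) + 2) / (2 * i + 1) * ((2 * i + 2) / (2 * i + 3)))) *
      ((2*k+1) * Wq k ^ 2) = 1 := by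
  induction k with
  | zero => simp [Wq]
  | succ k ih =>
    rw [Finset.prod_range_succ, Wq_succ]
    set P := ∏ i ∈ Finset.range k, ((2 * (i:ℝ) + 2) / (2 * i + 1) * ((2 * i + 2) / (2 * i + 3))) with hP
    set f := (2 * (k:ℝ) + 2) / (2 * k + 1) * ((2 * k + 2) / (2 * k + 3)) with hf
    have h1 : (2*(k:ℝ)+1) > 0 := by positivity
    have h2 : (2*(k:ℝ)+2) > 0 := by positivity
    have h3 : (2*(k:ℝ)+3) > 0 := by positivity
    have hW := Wq_pos k
    have key : f * ((2*((k:ℝ)+1)+1) * (Wq k * (2*k+1) / (2*k+2)) ^ 2) = (2*(k:ℝ)+1) * Wq k ^ 2 := by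
      rw [hf]; field_simp; ring
    calc P * f * ((2*(↑(k+1):ℝ)+1) * (Wq k * (2*k+1) / (2*k+2)) ^ 2)
        = P * (f * ((2*((k:ℝ)+1)+1) * (Wq k * (2*k+1) / (2*k+2)) ^ 2)) := by push_cast; ring
      _ = P * ((2*(k:ℝ)+1) * Wq k ^ 2) := by rw [key]
      _ = 1 := ih

lemma Wq_tendsto : Tendsto (fun k : ℕ => (2*(k:ℝ)+1) * Wq k ^ 2) atTop (nhds (2/π)) := by
  have hπ : π / 2 ≠ 0 := by positivity
  have h := (Real.tendsto_prod_pi_div_two).inv₀ hπ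
  have heq : (fun k : ℕ => (∏ i ∈ Finset.range k, ((2 * (i:ℝ) + 2) / (2 * i + 1) * ((2 * i + 2) / (2 * i + 3))))⁻¹)
      = fun k : ℕ => (2*(k:ℝ)+1) * Wq k ^ 2 := by
    funext k
    exact inv_eq_of_mul_eq_one_right (Wq_prod k)
  rw [heq] at h
  convert h using 2
  rw [inv_div]

lemma Wq_sq_tendsto : Tendsto (fun n : ℕ => Wq n ^ 2) atTop (nhds 0) := by
  have h1 : Tendsto (fun n : ℕ => ((2*(n:ℝ)+1))⁻¹) atTop (nhds 0) := by
    apply Tendsto.comp tendsto_inv_atTop_zero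
    apply Filter.tendsto_atTop_add_const_right
    exact (tendsto_natCast_atTop_atTop).const_mul_atTop (by norm_num)
  have h2 := Wq_tendsto.mul h1
  rw [mul_zero] at h2
  convert h2 using 2 with n
  have : (2*(n:ℝ)+1) ≠ 0 := by positivity
  field_simp

lemma a_tendsto : Tendsto (fun n : ℕ => (n:ℝ) * Wq n ^ 2) atTop (nhds (1/π)) := by
  have h := (Wq_tendsto.sub Wq_sq_tendsto).div_const 2
  have heq : (fun n : ℕ => ((2*(n:ℝ)+1) * Wq n ^ 2 - Wq n ^ 2)/2) = fun n : ℕ => (n:ℝ) * Wq n ^ 2 := by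
    funext n; ring
  rw [heq] at h
  convert h using 2
  ring

lemma a_strictMono : StrictMono (fun n : ℕ => (n:ℝ) * Wq n ^ 2) := by
  apply strictMono_nat_of_lt_succ
  intro n
  rw [Wq_succ]
  have hW := Wq_pos n
  have h2 : (2*(n:ℝ)+2) > 0 := by positivity
  rw [div_pow, ← mul_div_assoc, lt_div_iff₀ (by positivity)]
  push_cast
  nlinarith [sq_nonneg (Wq n), hW]

lemma b_strictAnti : StrictAnti (fun n : ℕ => (2*(n:ℝ)+1) * Wq n ^ 2) := by
  apply strictAnti_nat_of_succ_lt
  intro n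
  rw [Wq_succ]
  have hW := Wq_pos n
  have h2 : (2*(n:ℝ)+2) > 0 := by positivity
  rw [div_pow, ← mul_div_assoc, div_lt_iff₀ (by positivity)]
  push_cast
  nlinarith [sq_nonneg (Wq n), hW, mul_pos (mul_pos hW hW) h2]

lemma a_lt (n : ℕ) : (n:ℝ) * Wq n ^ 2 < 1/π := by
  have h1 : (n:ℝ) * Wq n ^ 2 < ((n+1:ℕ):ℝ) * Wq (n+1) ^ 2 := a_strictMono (Nat.lt_succ_self n)
  have h2 : ((n+1:ℕ):ℝ) * Wq (n+1) ^ 2 ≤ 1/π := a_strictMono.monotone.ge_of_tendsto a_tendsto (n+1)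
  linarith

lemma b_gt (n : ℕ) : 2/π < (2*(n:ℝ)+1) * Wq n ^ 2 := by
  have h1 : (2*((n+1:ℕ):ℝ)+1) * Wq (n+1) ^ 2 < (2*(n:ℝ)+1) * Wq n ^ 2 := b_strictAnti (Nat.lt_succ_self n)
  have h2 : 2/π ≤ (2*((n+1:ℕ):ℝ)+1) * Wq (n+1) ^ 2 := b_strictAnti.antitone.le_of_tendsto Wq_tendsto (n+1)
  linarith

noncomputable def Aq (n k : ℕ) : ℝ :=
  (n : ℝ) / 2 ^ (4 * n - 2) * (Nat.choose (2 * n) n : ℝ) * (Nat.choose (2 * n - 1) (n - k) : ℝ)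

lemma Aq_pos {n : ℕ} (hn : 0 < n) (k : ℕ) (hkn : k ≤ n) : 0 < Aq n k := by
  unfold Aq
  have h1 : 0 < (Nat.choose (2*n) n : ℝ) := by exact_mod_cast Nat.choose_pos (by omega)
  have h2 : 0 < (Nat.choose (2*n-1) (n-k) : ℝ) := by exact_mod_cast Nat.choose_pos (by omega)
  positivity

lemma choose_half (n : ℕ) (hn : 0 < n) :
    (Nat.choose (2*n) n) = 2 * Nat.choose (2*n-1) (n-1) := by
  have e1 : 2*n = (2*n-1) + 1 := by omega
  have e2 : n = (n-1) + 1 := by omega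
  have hp : Nat.choose ((2*n-1)+1) ((n-1)+1) = Nat.choose (2*n-1) (n-1) + Nat.choose (2*n-1) ((n-1)+1) :=
    Nat.choose_succ_succ _ _
  rw [show (2*n-1)+1 = 2*n by omega, show (n-1)+1 = n by omega] at hp
  have hs : Nat.choose (2*n-1) n = Nat.choose (2*n-1) (n-1) := by
    have := Nat.choose_symm (n := 2*n-1) (k := n) (by omega)
    rw [show 2*n-1-n = n-1 by omega] at this
    omega
  omega

lemma Aq_one {n : ℕ} (hn : 0 < n) : Aq n 1 = 2 * n * Wq n ^ 2 := by
  unfold Aq Wq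
  have hC : (Nat.choose (2*n) n : ℝ) = 2 * (Nat.choose (2*n-1) (n-1) : ℝ) := by
    exact_mod_cast choose_half n hn
  have h16 : ((2:ℝ)^(4*n-2)) * 4 = (4^n)^2 := by
    have e : 4*n-2+2 = 4*n := by omega
    calc ((2:ℝ)^(4*n-2)) * 4 = 2^(4*n-2) * 2^2 := by norm_num
      _ = 2^(4*n-2+2) := by rw [← pow_add]
      _ = 2^(4*n) := by rw [e]
      _ = (4^n)^2 := by
          rw [show (4:ℝ) = 2^2 by norm_num, ← pow_mul, ← pow_mul]
          congr 1
          ring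
  have hp2 : (0:ℝ) < 2^(4*n-2) := by positivity
  have hp4 : (0:ℝ) < 4^n := by positivity
  rw [hC]
  field_simp
  linear_combination (-((Nat.choose (2*n-1) (n-1) : ℝ))^2) * h16

lemma Aq_rec {n k : ℕ} (hk : 1 ≤ k) (hkn : k < n) :
    Aq n (k+1) * ((n:ℝ) + k) = Aq n k * ((n:ℝ) - k) := by
  have h := Nat.choose_succ_right_eq (2*n-1) (n-k-1)
  rw [show n-k-1+1 = n-k by omega, show 2*n-1-(n-k-1) = n+k by omega] at h
  have hcast : (Nat.choose (2*n-1) (n-(k+1)) : ℝ) * ((n:ℝ) + k)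
      = (Nat.choose (2*n-1) (n-k) : ℝ) * ((n:ℝ) - k) := by
    rw [show n-(k+1) = n-k-1 by omega]
    have h' : (Nat.choose (2*n-1) (n-k) : ℝ) * ((n-k : ℕ) : ℝ)
        = (Nat.choose (2*n-1) (n-k-1) : ℝ) * ((n+k : ℕ) : ℝ) := by exact_mod_cast h
    rw [Nat.cast_sub hkn.le] at h'
    push_cast at h' ⊢
    linarith
  unfold Aq
  linear_combination ((n : ℝ) / 2 ^ (4 * n - 2) * (Nat.choose (2 * n) n : ℝ)) * hcast

lemma Aq_bounds {n : ℕ} (hn : 0 < n) :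
    ∀ k, 1 ≤ k → k ≤ n →
      Aq n k ≤ Aq n 1 ∧ Aq n 1 * ((n:ℝ) - k * ((k:ℝ) - 1)) ≤ (n:ℝ) * Aq n k := by
  intro k
  induction k with
  | zero => omega
  | succ k ih =>
    intro _ hkn
    rcases Nat.eq_zero_or_pos k with rfl | hk1
    · norm_num [mul_comm]
    · obtain ⟨h1, h2⟩ := ih hk1 (by omega)
      have hkn' : k < n := by omega
      have hrec := Aq_rec hk1 hkn'
      have hApos := Aq_pos hn k (by omega)
      have hA1pos := Aq_pos hn 1 hn
      have hnk : (0:ℝ) < (n:ℝ) + k := by positivity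
      have hnk2 : (0:ℝ) ≤ (n:ℝ) - k := by
        have : (k:ℝ) ≤ n := by exact_mod_cast hkn'.le
        linarith
      have hkR : (1:ℝ) ≤ k := by exact_mod_cast hk1
      have hnR : (1:ℝ) ≤ n := by exact_mod_cast hn
      constructor
      · -- Aq n (k+1) ≤ Aq n 1
        have : Aq n (k+1) * ((n:ℝ)+k) ≤ Aq n k * ((n:ℝ)+k) := by
          rw [hrec]
          nlinarith
        have := le_of_mul_le_mul_right this hnk
        linarith
      · -- lower bound
        push_cast
        have key : Aq n 1 * ((n:ℝ) - (k+1) * ((k:ℝ)+1-1)) * ((n:ℝ)+k) ≤ (n:ℝ) * Aq n (k+1) * ((n:ℝ)+k) := by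
          have e : (n:ℝ) * Aq n (k+1) * ((n:ℝ)+k) = (n:ℝ) * (Aq n k * ((n:ℝ) - k)) := by
            rw [← hrec]; ring
          rw [e]
          nlinarith [mul_le_mul_of_nonneg_right h2 (le_of_lt hnk),
            mul_le_mul_of_nonneg_right h1 (by positivity : (0:ℝ) ≤ 2*k*n),
            mul_nonneg hA1pos.le (sq_nonneg (k:ℝ))]
        have := le_of_mul_le_mul_right key hnk
        linarith

set_option maxHeartbeats 1000000 in
theorem two_div_pi_sub_choose_bounds (n k : ℕ) (hn : 0 < n) (hk : 0 < k) (hkn : k ≤ n) :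
    0 < 2 / Real.pi -
        (n : ℝ) / 2 ^ (4 * n - 2) * (Nat.choose (2 * n) n : ℝ) *
          (Nat.choose (2 * n - 1) (n - k) : ℝ) ∧
      2 / Real.pi -
          (n : ℝ) / 2 ^ (4 * n - 2) * (Nat.choose (2 * n) n : ℝ) *
            (Nat.choose (2 * n - 1) (n - k) : ℝ) <
        4 * (k : ℝ) ^ 2 / (Real.pi * n) := by
  have hπ : (0:ℝ) < π := Real.pi_pos
  have hn' : (0:ℝ) < n := by exact_mod_cast hn
  have hkR : (1:ℝ) ≤ k := by exact_mod_cast hk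
  have hknR : (k:ℝ) ≤ n := by exact_mod_cast hkn
  obtain ⟨h1, h2⟩ := Aq_bounds hn k hk hkn
  have hApos : 0 < Aq n k := Aq_pos hn k hkn
  have hA1 : Aq n 1 = 2 * n * Wq n ^ 2 := Aq_one hn
  have hA1u : Aq n 1 < 2/π := by
    rw [hA1, show 2*(n:ℝ)*Wq n^2 = 2*((n:ℝ)*Wq n^2) by ring]
    have e : 2/π = 2*(1/π) := by ring
    linarith [a_lt n]
  have hA1l : (2/π) * (2*(n:ℝ)) < (2*(n:ℝ)+1) * Aq n 1 := by
    rw [hA1]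
    have := b_gt n
    nlinarith [sq_nonneg (Wq n)]
  have hAq_eq : (n : ℝ) / 2 ^ (4 * n - 2) * (Nat.choose (2 * n) n : ℝ) *
      (Nat.choose (2 * n - 1) (n - k) : ℝ) = Aq n k := rfl
  rw [hAq_eq]
  constructor
  · have : Aq n k ≤ Aq n 1 := h1
    linarith
  · rw [lt_div_iff₀ (by positivity : (0:ℝ) < π * n)]
    have he : (2/π - Aq n k) * (π * n) = 2*n - π * n * Aq n k := by
      field_simp
    rw [he]
    rcases le_or_gt (n:ℝ) (2*(k:ℝ)^2) with hcase | hcase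
    · nlinarith [mul_pos (mul_pos hπ hn') hApos]
    · have hfac : (0:ℝ) < (n:ℝ) - k*((k:ℝ)-1) := by nlinarith
      -- π(2n+1) n Aq ≥ π(2n+1) A1 (n - k(k-1)) > 4n (n-k(k-1)) etc.
      have hs1 : π * (2*(n:ℝ)+1) * (Aq n 1 * ((n:ℝ) - k*((k:ℝ)-1))) ≤ π * (2*(n:ℝ)+1) * ((n:ℝ) * Aq n k) := by
        apply mul_le_mul_of_nonneg_left h2
        positivity
      have hπA1 : (4:ℝ)*n < π * ((2*(n:ℝ)+1) * Aq n 1) := by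
        have := mul_lt_mul_of_pos_left hA1l hπ
        have hp2 : π * (2/π) = 2 := by field_simp
        nlinarith
      have hs2 : (4*(n:ℝ)) * ((n:ℝ) - k*((k:ℝ)-1)) < π * (2*(n:ℝ)+1) * (Aq n 1 * ((n:ℝ) - k*((k:ℝ)-1))) := by
        have := mul_lt_mul_of_pos_right hπA1 hfac
        nlinarith
      have hs3 : (4*(n:ℝ)) * ((n:ℝ) - k*((k:ℝ)-1)) < π * (2*(n:ℝ)+1) * ((n:ℝ) * Aq n k) := lt_of_lt_of_le hs2 hs1
      -- need (2n - 4k²)(2n+1) < 4n(n - k(k-1)), then divide by (2n+1)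
      have hpoly : (2*(n:ℝ) - 4*(k:ℝ)^2) * (2*(n:ℝ)+1) < (4*(n:ℝ)) * ((n:ℝ) - k*((k:ℝ)-1)) := by
        nlinarith
      have hs4 : (2*(n:ℝ) - 4*(k:ℝ)^2) * (2*(n:ℝ)+1) < (π * n * Aq n k) * (2*(n:ℝ)+1) := by
        calc (2*(n:ℝ) - 4*(k:ℝ)^2) * (2*(n:ℝ)+1) < π * (2*(n:ℝ)+1) * ((n:ℝ) * Aq n k) :=
              lt_of_lt_of_le hpoly hs3.le
          _ = (π * n * Aq n k) * (2*(n:ℝ)+1) := by ring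
      have final := lt_of_mul_lt_mul_right hs4 (by positivity : (0:ℝ) ≤ 2*(n:ℝ)+1)
      linarith
end

section
/- Let a, b, C be real numbers with b > 1 and C > 0, and let (W_k) be a sequence of real numbers satisfying |W_k| < C·log^a(2k+1)/k^b for all positive integers k. Then the limit as n → ∞ of sum over k from 1 to n of |W_k|·(2/π − (n/2^{4n-2})·binom(2n,n)·binom(2n-1,n-k)) is 0. -/
open Filter Real

noncomputable def Saux (n k : ℕ) : ℝ :=
  (n : ℝ) / 2 ^ (4 * n - 2) * (Nat.choose (2 * n) n : ℝ) * (Nat.choose (2 * n - 1) (n - k) : ℝ)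

lemma choose_two_mul_eq (n : ℕ) (hn : 1 ≤ n) :
    Nat.choose (2 * n) n = 2 * Nat.choose (2 * n - 1) (n - 1) := by
  obtain ⟨m, rfl⟩ := Nat.exists_eq_add_of_le hn
  have h4 : 2 * (1 + m) - 1 = 2 * m + 1 := by omega
  have h5 : 1 + m - 1 = m := by omega
  rw [h4, h5]
  have h1 : 2 * (1 + m) = (2 * m + 1) + 1 := by omega
  have h2 : 1 + m = m + 1 := by omega
  rw [h1, h2, Nat.choose_succ_succ]
  have h3 : Nat.choose (2 * m + 1) (m + 1) = Nat.choose (2 * m + 1) m := by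
    rw [← Nat.choose_symm (by omega)]
    congr 1; omega
  rw [h3]; ring

lemma Saux_one_eq (n : ℕ) : Saux n 1 = 2 * n / ((2 * n + 1) * Real.Wallis.W n) := by
  rcases Nat.eq_zero_or_pos n with rfl | hn
  · simp [Saux]
  have hW := Real.Wallis.W_pos n
  have hfac : (Nat.choose (2 * n) n : ℝ) * (n.factorial : ℝ) * (n.factorial : ℝ)
      = ((2 * n).factorial : ℝ) := by
    have := Nat.choose_mul_factorial_mul_factorial (show n ≤ 2 * n by omega)
    have h : 2 * n - n = n := by omega
    rw [h] at this
    exact_mod_cast congrArg (Nat.cast : ℕ → ℝ) this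
  have hch : (Nat.choose (2 * n) n : ℝ) = 2 * (Nat.choose (2 * n - 1) (n - 1) : ℝ) := by
    exact_mod_cast congrArg (Nat.cast : ℕ → ℝ) (choose_two_mul_eq n hn)
  rw [Saux, Real.Wallis.W_eq_factorial_ratio]
  have hpow : (2 : ℝ) ^ (4 * n) = 2 ^ (4 * n - 2) * 4 := by
    have : 4 * n = (4 * n - 2) + 2 := by omega
    rw [this, pow_add]; norm_num
  have hf1 : ((n.factorial : ℝ)) ≠ 0 := by positivity
  have hf2 : (((2 * n).factorial : ℝ)) ≠ 0 := by positivity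
  have hp2 : ((2 : ℝ) ^ (4 * n - 2)) ≠ 0 := by positivity
  have h2n1 : ((2 * n : ℝ) + 1) ≠ 0 := by positivity
  field_simp
  rw [hpow, ← hfac, hch]
  ring


lemma tendsto_Saux_one : Tendsto (fun n => Saux n 1) atTop (nhds (2 / π)) := by
  have hπ : (0:ℝ) < π := Real.pi_pos
  have h2 : Tendsto (fun n : ℕ => (Real.Wallis.W n)⁻¹) atTop (nhds (π / 2)⁻¹) :=
    (Real.Wallis.tendsto_W_nhds_pi_div_two).inv₀ (by positivity)
  have h1 : Tendsto (fun n : ℕ => 2 * (n:ℝ) / (2 * n + 1)) atTop (nhds 1) := by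
    have hden : Tendsto (fun n : ℕ => 2 * (n:ℝ) + 1) atTop atTop := by
      apply Filter.tendsto_atTop_add_const_right
      exact (tendsto_natCast_atTop_atTop (R := ℝ)).const_mul_atTop (by norm_num)
    have h0 : Tendsto (fun n : ℕ => (1:ℝ) / (2 * n + 1)) atTop (nhds 0) :=
      tendsto_const_nhds.div_atTop hden
    have : Tendsto (fun n : ℕ => 1 - (1:ℝ) / (2 * n + 1)) atTop (nhds (1 - 0)) :=
      tendsto_const_nhds.sub h0
    rw [sub_zero] at this
    apply this.congr'
    filter_upwards [eventually_ge_atTop 1] with n hn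
    have : (2 * (n:ℝ) + 1) ≠ 0 := by positivity
    field_simp
    ring
  have := h1.mul h2
  rw [one_mul] at this
  have heq : (π / 2)⁻¹ = 2 / π := by field_simp
  rw [heq] at this
  apply this.congr
  intro n
  rw [Saux_one_eq, div_eq_mul_inv, div_eq_mul_inv, mul_inv]
  ring

lemma Saux_succ (n k : ℕ) (h : k + 1 ≤ n) :
    Saux n (k + 1) = Saux n k * (((n:ℝ) - k) / ((n:ℝ) + k)) := by
  have hkey : Nat.choose (2 * n - 1) (n - k) * (n - k)
      = Nat.choose (2 * n - 1) (n - (k + 1)) * (n + k) := by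
    have h1 : n - k = (n - (k + 1)) + 1 := by omega
    have := Nat.choose_succ_right_eq (2 * n - 1) (n - (k + 1))
    rw [← h1] at this
    rw [this]
    congr 1
    omega
  have hcast : ((Nat.choose (2 * n - 1) (n - k) : ℝ)) * ((n:ℝ) - k)
      = (Nat.choose (2 * n - 1) (n - (k + 1)) : ℝ) * ((n:ℝ) + k) := by
    have := congrArg (Nat.cast : ℕ → ℝ) hkey
    push_cast at this
    rw [Nat.cast_sub (by omega)] at this
    push_cast at this
    convert this using 2 <;> push_cast <;> ring
  have hnpos : (1:ℝ) ≤ (n:ℝ) := by exact_mod_cast (show 1 ≤ n by omega)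
  have hnk : ((n:ℝ) + k) ≠ 0 := by
    have := Nat.cast_nonneg (α := ℝ) k; linarith
  have : (Nat.choose (2 * n - 1) (n - (k + 1)) : ℝ)
      = (Nat.choose (2 * n - 1) (n - k) : ℝ) * (((n:ℝ) - k) / ((n:ℝ) + k)) := by
    field_simp
    linarith [hcast]
  rw [Saux, Saux, this]
  ring

lemma tendsto_Saux (k : ℕ) (hk : 1 ≤ k) :
    Tendsto (fun n => Saux n k) atTop (nhds (2 / π)) := by
  induction k with
  | zero => omega
  | succ k ih =>
    rcases Nat.eq_zero_or_pos k with rfl | hk'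
    · exact tendsto_Saux_one
    have hratio : Tendsto (fun n : ℕ => ((n:ℝ) - k) / ((n:ℝ) + k)) atTop (nhds 1) := by
      have hden : Tendsto (fun n : ℕ => (n:ℝ) + k) atTop atTop :=
        Filter.tendsto_atTop_add_const_right _ _ (tendsto_natCast_atTop_atTop (R := ℝ))
      have h0 : Tendsto (fun n : ℕ => (2 * (k:ℝ)) / ((n:ℝ) + k)) atTop (nhds 0) :=
        tendsto_const_nhds.div_atTop hden
      have : Tendsto (fun n : ℕ => 1 - (2 * (k:ℝ)) / ((n:ℝ) + k)) atTop (nhds (1 - 0)) :=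
        tendsto_const_nhds.sub h0
      rw [sub_zero] at this
      apply this.congr'
      filter_upwards [eventually_ge_atTop 1] with n hn
      have hnk : ((n:ℝ) + k) ≠ 0 := by positivity
      field_simp
      ring
    have := (ih hk').mul hratio
    rw [mul_one] at this
    apply this.congr'
    filter_upwards [eventually_ge_atTop (k + 1)] with n hn
    exact (Saux_succ n k hn).symm

lemma summable_absW (a b C : ℝ) (hb : 1 < b) (hC : 0 < C) (W : ℕ → ℝ)
    (hW : ∀ k : ℕ, 0 < k → |W k| < C * Real.log (2 * k + 1) ^ a / (k : ℝ) ^ b) :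
    Summable (fun k => |W k|) := by
  rcases le_or_gt a 0 with ha | ha
  · have hsum : Summable (fun k : ℕ => C * (k:ℝ) ^ (-b)) :=
      (Real.summable_nat_rpow.mpr (by linarith)).mul_left C
    apply hsum.of_norm_bounded_eventually_nat
    filter_upwards [eventually_ge_atTop 4] with k hk
    have hk0 : 0 < k := by omega
    have hkR : (1:ℝ) ≤ (k:ℝ) := by exact_mod_cast hk0
    have hlog1 : (1:ℝ) ≤ Real.log (2 * k + 1) := by
      have h3 : (Real.exp 1 : ℝ) ≤ 2 * k + 1 := by
        have h4 : (4:ℝ) ≤ (k:ℝ) := by exact_mod_cast hk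
        have := Real.exp_one_lt_d9
        linarith
      calc (1:ℝ) = Real.log (Real.exp 1) := by rw [Real.log_exp]
        _ ≤ Real.log (2 * k + 1) := Real.log_le_log (Real.exp_pos 1) h3
    have hloga : Real.log (2 * k + 1) ^ a ≤ 1 :=
      Real.rpow_le_one_of_one_le_of_nonpos hlog1 ha
    have hkb : (0:ℝ) < (k:ℝ) ^ b := Real.rpow_pos_of_pos (by linarith) b
    rw [Real.norm_eq_abs, abs_abs]
    refine le_trans (le_of_lt (hW k hk0)) ?_
    rw [Real.rpow_neg (Nat.cast_nonneg k), div_eq_mul_inv]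
    have hinv : (0:ℝ) ≤ ((k:ℝ) ^ b)⁻¹ := by positivity
    have : C * Real.log (2 * k + 1) ^ a ≤ C := by nlinarith
    nlinarith
  · set ε : ℝ := (b - 1) / (2 * a) with hε
    have hεpos : 0 < ε := div_pos (by linarith) (by linarith)
    have hexp : ε * a - b = -((b + 1) / 2) := by
      field_simp [hε]
      have hea : ε * a * 2 = b - 1 := by
        rw [hε, div_mul_eq_mul_div, div_mul_eq_mul_div, div_eq_iff (by positivity)]; ring
      linarith
    have hsum : Summable (fun k : ℕ => (C * (3 ^ (ε * a) / ε ^ a)) * (k:ℝ) ^ (ε * a - b)) := by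
      apply Summable.mul_left
      apply Real.summable_nat_rpow.mpr
      rw [hexp]
      linarith
    apply hsum.of_norm_bounded_eventually_nat
    filter_upwards [eventually_ge_atTop 1] with k hk
    have hk0 : 0 < k := by omega
    have hkR : (1:ℝ) ≤ (k:ℝ) := by exact_mod_cast hk0
    have hlognn : (0:ℝ) ≤ Real.log (2 * k + 1) := by
      apply Real.log_nonneg; linarith
    -- log (2k+1) ≤ (2k+1)^ε/ε ≤ (3k)^ε/ε
    have h1 : Real.log (2 * k + 1) ≤ ((3:ℝ) * k) ^ ε / ε := by
      refine le_trans (Real.log_le_rpow_div (by positivity) hεpos) ?_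
      gcongr
      linarith
    have h3k : (0:ℝ) < (3:ℝ) * k := by linarith
    have h2 : Real.log (2 * k + 1) ^ a ≤ (((3:ℝ) * k) ^ ε / ε) ^ a :=
      Real.rpow_le_rpow hlognn h1 (le_of_lt ha)
    have h3 : (((3:ℝ) * k) ^ ε / ε) ^ a = 3 ^ (ε * a) / ε ^ a * (k:ℝ) ^ (ε * a) := by
      rw [Real.div_rpow (by positivity) (le_of_lt hεpos)]
      rw [Real.mul_rpow (by positivity) (by positivity),
        Real.mul_rpow (by positivity) (by positivity),
        ← Real.rpow_mul (by norm_num : (0:ℝ) ≤ 3),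
        ← Real.rpow_mul (Nat.cast_nonneg k)]
      ring
    rw [Real.norm_eq_abs, abs_abs]
    refine le_trans (le_of_lt (hW k hk0)) ?_
    have hkb : (0:ℝ) < (k:ℝ) ^ b := Real.rpow_pos_of_pos (by linarith) b
    have hbd : Real.log (2 * k + 1) ^ a ≤ 3 ^ (ε * a) / ε ^ a * (k:ℝ) ^ (ε * a) := by
      rw [← h3]; exact h2
    calc C * Real.log (2 * k + 1) ^ a / (k:ℝ) ^ b
        ≤ C * (3 ^ (ε * a) / ε ^ a * (k:ℝ) ^ (ε * a)) / (k:ℝ) ^ b := by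
          gcongr
      _ = C * (3 ^ (ε * a) / ε ^ a) * (k:ℝ) ^ (ε * a - b) := by
          rw [Real.rpow_sub (by linarith : (0:ℝ) < (k:ℝ))]
          ring

open Filter

theorem tendsto_sum_weight_zero (a b C : ℝ) (hb : 1 < b) (hC : 0 < C) (W : ℕ → ℝ)
    (hW : ∀ k : ℕ, 0 < k → |W k| < C * Real.log (2 * k + 1) ^ a / (k : ℝ) ^ b) :
    Tendsto
      (fun n : ℕ =>
        ∑ k ∈ Finset.Icc 1 n,
          |W k| *
            (2 / Real.pi -
              (n : ℝ) / 2 ^ (4 * n - 2) * (Nat.choose (2 * n) n : ℝ) *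
                (Nat.choose (2 * n - 1) (n - k) : ℝ)))
      atTop (nhds 0) := by
  have hπ : (0:ℝ) < Real.pi := Real.pi_pos
  have hsum : Summable (fun k => |W k|) := summable_absW a b C hb hC W hW
  obtain ⟨M0, hM0⟩ := tendsto_Saux_one.bddAbove_range
  have hM0' : ∀ n, Saux n 1 ≤ M0 := fun n => hM0 ⟨n, rfl⟩
  have hM0nn : 0 ≤ M0 := le_trans (by simp [Saux]) (hM0' 0)
  set M : ℝ := 2 / Real.pi + M0 with hM
  have hMnn : 0 ≤ M := by positivity
  have hSnn : ∀ n k, 0 ≤ Saux n k := by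
    intro n k; unfold Saux; positivity
  have hSle : ∀ n k, k ∈ Finset.Icc 1 n → Saux n k ≤ Saux n 1 := by
    intro n k hk
    rw [Finset.mem_Icc] at hk
    have hmid : Nat.choose (2 * n - 1) (n - k) ≤ Nat.choose (2 * n - 1) (n - 1) := by
      have := Nat.choose_le_middle (n - k) (2 * n - 1)
      have heq : (2 * n - 1) / 2 = n - 1 := by omega
      rwa [heq] at this
    unfold Saux
    gcongr
  have habs : ∀ n k, k ∈ Finset.Icc 1 n → |2 / Real.pi - Saux n k| ≤ M := by
    intro n k hk
    have h1 := hSnn n k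
    have h2 := (hSle n k hk).trans (hM0' n)
    have h2pi : (0:ℝ) < 2 / Real.pi := by positivity
    rw [abs_le]
    constructor <;> linarith [h2pi]
  -- rewrite the sum as a tsum via indicator
  have hrw : ∀ n : ℕ,
      (∑ k ∈ Finset.Icc 1 n, |W k| * (2 / Real.pi - Saux n k))
        = ∑' k, Set.indicator (Finset.Icc 1 n : Set ℕ)
            (fun k => |W k| * (2 / Real.pi - Saux n k)) k := by
    intro n
    rw [tsum_eq_sum (s := Finset.Icc 1 n)
      (fun b hb => Set.indicator_of_notMem (by simpa using hb) _)]
    exact Finset.sum_congr rfl fun k hk => by rw [Set.indicator_of_mem (by simpa using hk)]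
  have hmain : Tendsto
      (fun n : ℕ => ∑' k, Set.indicator (Finset.Icc 1 n : Set ℕ)
        (fun k => |W k| * (2 / Real.pi - Saux n k)) k) atTop (nhds (∑' _ : ℕ, (0:ℝ))) := by
    apply tendsto_tsum_of_dominated_convergence (bound := fun k => M * |W k|)
      (hsum.mul_left M)
    · intro k
      rcases Nat.eq_zero_or_pos k with rfl | hk
      · have : ∀ n : ℕ, Set.indicator (Finset.Icc 1 n : Set ℕ)
            (fun k => |W k| * (2 / Real.pi - Saux n k)) 0 = 0 := by
          intro n
          apply Set.indicator_of_notMem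
          simp
        simpa only [this] using tendsto_const_nhds
      · have hl := ((tendsto_const_nhds (x := 2 / Real.pi) (f := atTop (α := ℕ))).sub
          (tendsto_Saux k hk)).const_mul (|W k|)
        rw [sub_self, mul_zero] at hl
        apply hl.congr'
        filter_upwards [eventually_ge_atTop k] with n hn
        rw [Set.indicator_of_mem]
        simp only [Finset.coe_Icc, Set.mem_Icc]
        exact ⟨hk, hn⟩
    · filter_upwards with n
      intro k
      by_cases hk : k ∈ (Finset.Icc 1 n : Set ℕ)
      · rw [Set.indicator_of_mem hk, Real.norm_eq_abs, abs_mul, abs_abs]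
        have hk' : k ∈ Finset.Icc 1 n := by simpa using hk
        calc |W k| * |2 / Real.pi - Saux n k| ≤ |W k| * M :=
              mul_le_mul_of_nonneg_left (habs n k hk') (abs_nonneg _)
          _ = M * |W k| := by ring
      · rw [Set.indicator_of_notMem hk]
        simp only [norm_zero]
        positivity
  rw [tsum_zero] at hmain
  apply hmain.congr
  intro n
  rw [← hrw]
  rfl
end
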